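/- arXiv:1710.01604 — 5 statements merged into one kernel-verified Lean document; each statement's English description precedes it below -/
import Mathlib

section
/- Given constants D > 0 and κ_a > 0, define φ(τ) = κ_a/√(πDτ) − (κ_a²/D)·erfcx(κ_a·√(τ/D)) for τ > 0. Then for every T > 0, φ is integrable on (0,T) and ∫_0^T φ(τ) dτ = 1 − erfcx(κ_a·√(T/D)). -/
open Real MeasureTheory Set

/-- The complementary error function `erfc x = (2/√π) ∫_x^∞ e^{-t²} dt`. -/
noncomputable def erfc (x : ℝ) : ℝ := (2 / Real.sqrt π) * ∫ t in Set.Ioi x, Real.exp (-t ^ 2)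

/-- The scaled complementary error function `erfcx x = e^{x²} erfc x`. -/
noncomputable def erfcx (x : ℝ) : ℝ := Real.exp (x ^ 2) * erfc x

/-- The first-adsorption-time density
`φ(τ) = κ_a/√(πDτ) − (κ_a²/D) erfcx(κ_a √(τ/D))`. -/
noncomputable def phi (D κa τ : ℝ) : ℝ :=
  κa / Real.sqrt (π * D * τ) - (κa ^ 2 / D) * erfcx (κa * Real.sqrt (τ / D))

/-! Since `erfcx' x = 2 x erfcx x - 2/√π`, the chain rule shows that `τ ↦ -erfcx (κa √(τ/D))` is
an antiderivative of `φ` on `(0, ∞)`. It is continuous up to `τ = 0`, where it equals `-erfcx 0 = -1`,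
and the only singular part of `φ` is the integrable `τ^(-1/2)` term, so the fundamental theorem of
calculus on `[0, T]` gives the integral. -/

lemma integrable_exp_neg_sq : Integrable fun t : ℝ => exp (-t ^ 2) := by
  simpa using integrable_exp_neg_mul_sq one_pos

lemma erfc_eq_one_sub_integral (x : ℝ) :
    erfc x = 1 - 2 / √π * ∫ t in (0 : ℝ)..x, exp (-t ^ 2) := by
  have hhalf : ∫ t in Ioi (0 : ℝ), exp (-t ^ 2) = √π / 2 := by
    simpa using integral_gaussian_Ioi 1
  have hsplit := intervalIntegral.integral_Ioi_sub_Ioi' (μ := volume) (a := 0) (b := x)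
    integrable_exp_neg_sq.integrableOn integrable_exp_neg_sq.integrableOn
  have hπ : √π ≠ 0 := (sqrt_pos.2 pi_pos).ne'
  rw [erfc, ← hsplit, hhalf]
  field_simp
  ring

lemma erfcx_zero : erfcx 0 = 1 := by
  simp [erfcx, erfc_eq_one_sub_integral]

lemma hasDerivAt_erfc (x : ℝ) : HasDerivAt erfc (-(2 / √π * exp (-x ^ 2))) x := by
  rw [show erfc = _ from funext erfc_eq_one_sub_integral]
  have hcont : Continuous fun t : ℝ => exp (-t ^ 2) := by fun_prop
  exact ((hcont.integral_hasStrictDerivAt 0 x).hasDerivAt.const_mul _).const_sub 1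

lemma hasDerivAt_erfcx (x : ℝ) : HasDerivAt erfcx (2 * x * erfcx x - 2 / √π) x := by
  have hexp : HasDerivAt (fun y : ℝ => exp (y ^ 2)) (exp (x ^ 2) * (2 * x)) x := by
    simpa using (hasDerivAt_pow 2 x).exp
  refine (hexp.mul (hasDerivAt_erfc x)).congr_deriv ?_
  have hcancel : exp (x ^ 2) * exp (-x ^ 2) = 1 := by rw [← exp_add]; simp
  rw [erfcx]
  linear_combination -(2 / √π) * hcancel

@[fun_prop]
lemma continuous_erfcx : Continuous erfcx :=
  continuous_iff_continuousAt.2 fun x => (hasDerivAt_erfcx x).continuousAt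

lemma hasDerivAt_erfcx_mul_sqrt_div {D κa τ : ℝ} (hD : 0 < D) (hτ : 0 < τ) :
    HasDerivAt (fun τ => erfcx (κa * √(τ / D))) (-phi D κa τ) τ := by
  have hτD : τ / D ≠ 0 := (div_pos hτ hD).ne'
  have hinner : HasDerivAt (fun τ => κa * √(τ / D)) (κa * (1 / D / (2 * √(τ / D)))) τ :=
    (((hasDerivAt_id τ).div_const D).sqrt hτD).const_mul κa
  refine ((hasDerivAt_erfcx _).comp τ hinner).congr_deriv ?_
  have hsqrt_div : √(τ / D) = √τ / √D := sqrt_div hτ.le D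
  have hsqrt_mul : √(π * D * τ) = √π * (√D * √τ) := by
    rw [mul_assoc, sqrt_mul pi_pos.le, sqrt_mul hD.le]
  have hD_sq : √D ^ 2 = D := sq_sqrt hD.le
  have hsqrtD : √D ≠ 0 := (sqrt_pos.2 hD).ne'
  have hsqrtτ : √τ ≠ 0 := (sqrt_pos.2 hτ).ne'
  have hsqrtπ : √π ≠ 0 := (sqrt_pos.2 pi_pos).ne'
  rw [phi, hsqrt_div, hsqrt_mul]
  field_simp
  linear_combination -κa * hD_sq

lemma integrableOn_phi {D : ℝ} (κa : ℝ) (hD : 0 < D) (T : ℝ) :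
    IntegrableOn (phi D κa) (Ioo 0 T) := by
  have hπD : 0 ≤ π * D := (mul_pos pi_pos hD).le
  have hrpow : IntegrableOn (fun τ : ℝ => κa / √(π * D) * τ ^ (-(1 / 2) : ℝ)) (Ioo 0 T) :=
    ((intervalIntegral.intervalIntegrable_rpow' (by norm_num)).1.mono_set
      Ioo_subset_Ioc_self).const_mul _
  have hsingular : IntegrableOn (fun τ => κa / √(π * D * τ)) (Ioo 0 T) := by
    refine hrpow.congr_fun (fun τ hτ => ?_) measurableSet_Ioo
    dsimp only
    rw [rpow_neg hτ.1.le, ← sqrt_eq_rpow, sqrt_mul hπD, div_mul_eq_div_div,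
      div_eq_mul_inv (κa / _)]
  have hregular : IntegrableOn (fun τ => κa ^ 2 / D * erfcx (κa * √(τ / D))) (Ioo 0 T) :=
    (Continuous.integrableOn_Icc (by fun_prop)).mono_set Ioo_subset_Icc_self
  exact hsingular.sub hregular

theorem phi_integral_Ioo_general (D κa : ℝ) (hD : 0 < D) (T : ℝ) (hT : 0 < T) :
    IntegrableOn (phi D κa) (Set.Ioo 0 T) ∧
      ∫ τ in Set.Ioo (0 : ℝ) T, phi D κa τ = 1 - erfcx (κa * Real.sqrt (T / D)) := by
  have hint := integrableOn_phi κa hD T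
  refine ⟨hint, ?_⟩
  have hftc : ∫ τ in (0 : ℝ)..T, phi D κa τ =
      -erfcx (κa * √(T / D)) - -erfcx (κa * √(0 / D)) :=
    intervalIntegral.integral_eq_sub_of_hasDerivAt_of_le hT.le
      (by fun_prop : Continuous fun τ => -erfcx (κa * √(τ / D))).continuousOn
      (fun τ hτ => by simpa using (hasDerivAt_erfcx_mul_sqrt_div hD hτ.1).fun_neg)
      ((intervalIntegrable_iff_integrableOn_Ioo_of_le hT.le).2 hint)
  rw [← integral_Ioc_eq_integral_Ioo, ← intervalIntegral.integral_of_le hT.le, hftc,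
    zero_div, sqrt_zero, mul_zero, erfcx_zero]
  ring

/-- for every `T > 0`, `φ` is integrable on `(0,T)` and
`∫_0^T φ(τ) dτ = 1 − erfcx(κ_a √(T/D))`. -/
theorem phi_integral_Ioo (D κa : ℝ) (hD : 0 < D) (hκa : 0 < κa) (T : ℝ) (hT : 0 < T) :
    IntegrableOn (phi D κa) (Set.Ioo 0 T) ∧
      ∫ τ in Set.Ioo (0 : ℝ) T, phi D κa τ = 1 - erfcx (κa * Real.sqrt (T / D)) :=
  phi_integral_Ioo_general D κa hD T hT
end

section
/- For every a ≥ 0, b > 0 and s > 0, ∫_0^∞ e^{−st}·exp(a·b + b²·t)·erfc(a/(2√t) + b·√t) dt = e^{−a·√s} / (√s·(√s + b)). -/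
open Real MeasureTheory Set

lemma cs_surj (α β : ℝ) (hα : 0 < α) (hβ : 0 < β) :
    (fun u : ℝ => α * u - β / u) '' Ioi 0 = univ := by
  ext w
  simp only [mem_image, mem_univ, iff_true, mem_Ioi]
  set R := Real.sqrt (w ^ 2 + 4 * α * β) with hR
  have hR2 : R ^ 2 = w ^ 2 + 4 * α * β := Real.sq_sqrt (by positivity)
  have hRnn : 0 ≤ R := Real.sqrt_nonneg _
  have hRw : -w < R := by nlinarith [sq_abs w, abs_nonneg w, neg_le_abs w]
  have hwR : 0 < w + R := by linarith
  have hu : 0 < (w + R) / (2 * α) := div_pos hwR (by linarith)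
  refine ⟨(w + R) / (2 * α), hu, ?_⟩
  rw [div_div_eq_mul_div, eq_comm, ← sub_eq_zero]
  field_simp
  ring_nf
  nlinarith [hR2]

lemma cs_deriv (α β : ℝ) : ∀ u ∈ Ioi (0:ℝ),
    HasDerivWithinAt (fun u : ℝ => α * u - β / u) (α + β / u ^ 2) (Ioi 0) u := by
  intro u hu
  have hu0 : u ≠ 0 := ne_of_gt hu
  have h := ((hasDerivAt_id u).const_mul α).sub ((hasDerivAt_inv hu0).const_mul β)
  have heq : (fun u : ℝ => α * u - β / u) = fun u : ℝ => α * id u - β * u⁻¹ := by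
    funext v; rw [div_eq_mul_inv, id]
  have : HasDerivAt (fun u : ℝ => α * u - β / u) (α + β / u ^ 2) u := by
    rw [heq]; exact h.congr_deriv (by ring)
  exact this.hasDerivWithinAt

lemma cs_inj (α β : ℝ) (hα : 0 < α) (hβ : 0 < β) :
    InjOn (fun u : ℝ => α * u - β / u) (Ioi 0) := by
  apply StrictMonoOn.injOn
  intro u hu v hv huv
  have h1 : β / v < β / u := div_lt_div_of_pos_left hβ hu huv
  have h2 : α * u < α * v := by nlinarith [mem_Ioi.mp hu]
  simp only [mem_Ioi] at *
  show α * u - β / u < α * v - β / v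
  linarith

lemma gauss_int : Integrable (fun x : ℝ => Real.exp (-x ^ 2)) := by
  simpa using integrable_exp_neg_mul_sq (one_pos)

lemma gauss_val : ∫ x : ℝ, Real.exp (-x ^ 2) = Real.sqrt π := by
  simpa using integral_gaussian 1

lemma cs_int0 (α β : ℝ) (hα : 0 < α) (hβ : 0 < β) :
    IntegrableOn (fun u : ℝ => (α + β / u ^ 2) * Real.exp (-(α * u - β / u) ^ 2)) (Ioi 0) := by
  have h := (integrableOn_image_iff_integrableOn_abs_deriv_smul measurableSet_Ioi
    (cs_deriv α β) (cs_inj α β hα hβ) (fun x : ℝ => Real.exp (-x ^ 2))).mp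
    (by rw [cs_surj α β hα hβ]; exact gauss_int.integrableOn)
  refine h.congr_fun (fun u hu => ?_) measurableSet_Ioi
  have hu' : (0:ℝ) < u := hu
  dsimp only
  rw [smul_eq_mul, abs_of_pos (by positivity)]

lemma cs_eq0 (α β : ℝ) (hα : 0 < α) (hβ : 0 < β) :
    ∫ u in Ioi (0:ℝ), (α + β / u ^ 2) * Real.exp (-(α * u - β / u) ^ 2) = Real.sqrt π := by
  have h := integral_image_eq_integral_abs_deriv_smul measurableSet_Ioi
    (cs_deriv α β) (cs_inj α β hα hβ) (fun x : ℝ => Real.exp (-x ^ 2))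
  rw [cs_surj α β hα hβ, setIntegral_univ, gauss_val] at h
  have h2 : ∫ u in Ioi (0:ℝ), |α + β / u ^ 2| • Real.exp (-(α * u - β / u) ^ 2)
      = ∫ u in Ioi (0:ℝ), (α + β / u ^ 2) * Real.exp (-(α * u - β / u) ^ 2) := by
    refine setIntegral_congr_fun measurableSet_Ioi (fun u hu => ?_)
    have hu' : (0:ℝ) < u := hu
    rw [smul_eq_mul, abs_of_pos (by positivity)]
  rw [← h2]
  exact h.symm

lemma psi_image (α β : ℝ) (hα : 0 < α) (hβ : 0 < β) :
    (fun u : ℝ => β / (α * u)) '' Ioi 0 = Ioi 0 := by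
  ext y
  simp only [mem_image, mem_Ioi]
  constructor
  · rintro ⟨u, hu, rfl⟩; positivity
  · intro hy
    refine ⟨β / (α * y), by positivity, ?_⟩
    field_simp

lemma psi_deriv (α β : ℝ) (hα : 0 < α) : ∀ u ∈ Ioi (0:ℝ),
    HasDerivWithinAt (fun u : ℝ => β / (α * u)) (-(β / (α * u ^ 2))) (Ioi 0) u := by
  intro u hu
  have hu0 : u ≠ 0 := ne_of_gt hu
  have h := (hasDerivAt_inv hu0).const_mul (β / α)
  have heq : (fun u : ℝ => β / (α * u)) = fun u : ℝ => (β / α) * u⁻¹ := by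
    funext v; field_simp
  have : HasDerivAt (fun u : ℝ => β / (α * u)) (-(β / (α * u ^ 2))) u := by
    rw [heq]; exact h.congr_deriv (by ring)
  exact this.hasDerivWithinAt

lemma psi_inj (α β : ℝ) (hα : 0 < α) (hβ : 0 < β) :
    InjOn (fun u : ℝ => β / (α * u)) (Ioi 0) := by
  intro u hu v hv h
  simp only [mem_Ioi] at hu hv
  dsimp at h
  rw [div_eq_div_iff (by positivity) (by positivity)] at h
  have h' : (β * α) * v = (β * α) * u := by linear_combination h
  exact (mul_left_cancel₀ (by positivity) h').symm

lemma cs_flip (α β : ℝ) (hα : 0 < α) (hβ : 0 < β) :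
    ∫ u in Ioi (0:ℝ), Real.exp (-(α * u - β / u) ^ 2)
      = ∫ u in Ioi (0:ℝ), (β / (α * u ^ 2)) * Real.exp (-(α * u - β / u) ^ 2) := by
  have h := integral_image_eq_integral_abs_deriv_smul measurableSet_Ioi
    (psi_deriv α β hα) (psi_inj α β hα hβ) (fun v : ℝ => Real.exp (-(α * v - β / v) ^ 2))
  rw [psi_image α β hα hβ] at h
  rw [h]
  refine setIntegral_congr_fun measurableSet_Ioi (fun u hu => ?_)
  have hu' : (0:ℝ) < u := hu
  have e1 : α * (β / (α * u)) = β / u := by field_simp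
  have e2 : β / (β / (α * u)) = α * u := by
    rw [div_div_eq_mul_div, mul_comm]
    field_simp
  rw [smul_eq_mul, abs_neg, abs_of_pos (by positivity)]
  congr 2
  rw [e1, e2]
  ring

lemma cs_meas (α β : ℝ) (c : ℝ) :
    AEStronglyMeasurable (fun u : ℝ => c * Real.exp (-(α * u - β / u) ^ 2))
      (volume.restrict (Ioi 0)) := by
  apply Measurable.aestronglyMeasurable
  fun_prop

lemma cs_int1 (α β : ℝ) (hα : 0 < α) (hβ : 0 < β) :
    IntegrableOn (fun u : ℝ => α * Real.exp (-(α * u - β / u) ^ 2)) (Ioi 0) := by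
  refine Integrable.mono (cs_int0 α β hα hβ) (cs_meas α β α) ?_
  refine (ae_restrict_iff' measurableSet_Ioi).mpr (ae_of_all _ (fun u hu => ?_))
  have hu' : (0:ℝ) < u := hu
  rw [Real.norm_eq_abs, Real.norm_eq_abs, abs_of_pos (by positivity),
    abs_of_pos (by positivity)]
  have : (0:ℝ) < β / u ^ 2 := by positivity
  nlinarith [Real.exp_pos (-(α * u - β / u) ^ 2)]

lemma cs_meas2 (α β : ℝ) :
    AEStronglyMeasurable (fun u : ℝ => (β / u ^ 2) * Real.exp (-(α * u - β / u) ^ 2))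
      (volume.restrict (Ioi 0)) := by
  apply Measurable.aestronglyMeasurable
  fun_prop

lemma cs_int2 (α β : ℝ) (hα : 0 < α) (hβ : 0 < β) :
    IntegrableOn (fun u : ℝ => (β / u ^ 2) * Real.exp (-(α * u - β / u) ^ 2)) (Ioi 0) := by
  refine Integrable.mono (cs_int0 α β hα hβ) (cs_meas2 α β) ?_
  refine (ae_restrict_iff' measurableSet_Ioi).mpr (ae_of_all _ (fun u hu => ?_))
  have hu' : (0:ℝ) < u := hu
  rw [Real.norm_eq_abs, Real.norm_eq_abs, abs_of_pos (by positivity),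
    abs_of_pos (by positivity)]
  nlinarith [Real.exp_pos (-(α * u - β / u) ^ 2), sq_nonneg u]

lemma cs_main (α β : ℝ) (hα : 0 < α) (hβ : 0 < β) :
    ∫ u in Ioi (0:ℝ), Real.exp (-(α * u - β / u) ^ 2) = Real.sqrt π / (2 * α) := by
  set I := ∫ u in Ioi (0:ℝ), Real.exp (-(α * u - β / u) ^ 2) with hI
  have hsplit : ∫ u in Ioi (0:ℝ), (α + β / u ^ 2) * Real.exp (-(α * u - β / u) ^ 2)
      = (∫ u in Ioi (0:ℝ), α * Real.exp (-(α * u - β / u) ^ 2))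
        + ∫ u in Ioi (0:ℝ), (β / u ^ 2) * Real.exp (-(α * u - β / u) ^ 2) := by
    rw [← integral_add (cs_int1 α β hα hβ) (cs_int2 α β hα hβ)]
    refine setIntegral_congr_fun measurableSet_Ioi (fun u hu => ?_)
    ring
  have h1 : ∫ u in Ioi (0:ℝ), α * Real.exp (-(α * u - β / u) ^ 2) = α * I := by
    rw [hI, ← integral_const_mul]
  have h2 : ∫ u in Ioi (0:ℝ), (β / u ^ 2) * Real.exp (-(α * u - β / u) ^ 2) = α * I := by
    rw [hI, cs_flip α β hα hβ, ← integral_const_mul]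
    refine setIntegral_congr_fun measurableSet_Ioi (fun u hu => ?_)
    have hu' : (0:ℝ) < u := hu
    field_simp
  have := cs_eq0 α β hα hβ
  rw [hsplit, h1, h2] at this
  field_simp
  linarith

lemma cs_int (α β : ℝ) (hα : 0 < α) (hβ : 0 < β) :
    IntegrableOn (fun u : ℝ => Real.exp (-(α * u - β / u) ^ 2)) (Ioi 0) := by
  have h := (cs_int1 α β hα hβ).const_mul α⁻¹
  refine IntegrableOn.congr_fun h (fun u hu => ?_) measurableSet_Ioi
  field_simp

lemma sq_split (c s x : ℝ) (hs : 0 < s) (hx : 0 < x) :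
    -s * x ^ 2 - c ^ 2 / (4 * x ^ 2) = -(Real.sqrt s * x - (c / 2) / x) ^ 2 - c * Real.sqrt s := by
  have h : Real.sqrt s ^ 2 = s := Real.sq_sqrt hs.le
  have hx0 : x ≠ 0 := ne_of_gt hx
  field_simp
  linear_combination (16 * x ^ 4) * h

lemma K_congr (c s : ℝ) (hc : 0 < c) (hs : 0 < s) :
    ∀ x ∈ Ioi (0:ℝ),
      (|(2:ℝ)| * x ^ ((2:ℝ) - 1)) • (Real.exp (-s * (x ^ (2:ℝ)) - c ^ 2 / (4 * (x ^ (2:ℝ)))) / Real.sqrt (x ^ (2:ℝ)))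
        = (2 * Real.exp (-(c * Real.sqrt s))) * Real.exp (-(Real.sqrt s * x - (c / 2) / x) ^ 2) := by
  intro x hx
  have hx' : (0:ℝ) < x := hx
  have h2 : x ^ ((2:ℝ)) = x ^ (2:ℕ) := by
    rw [← Real.rpow_natCast x 2]; norm_num
  have h1 : x ^ ((2:ℝ) - 1) = x := by norm_num
  have hsq : Real.sqrt (x ^ (2:ℕ)) = x := by
    exact Real.sqrt_sq hx'.le
  rw [smul_eq_mul, h1, h2, hsq, sq_split c s x hs hx']
  rw [sub_eq_add_neg, Real.exp_add]
  have hx0 : x ≠ 0 := ne_of_gt hx'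
  rw [abs_of_pos (by norm_num : (0:ℝ) < 2)]
  field_simp

lemma K_eq (c s : ℝ) (hc : 0 < c) (hs : 0 < s) :
    ∫ t in Ioi (0:ℝ), Real.exp (-s * t - c ^ 2 / (4 * t)) / Real.sqrt t
      = Real.sqrt π / Real.sqrt s * Real.exp (-(c * Real.sqrt s)) := by
  rw [← integral_comp_rpow_Ioi_of_pos (p := 2)
    (g := fun t => Real.exp (-s * t - c ^ 2 / (4 * t)) / Real.sqrt t) two_pos]
  have habs : (2:ℝ) = |2| := by norm_num
  calc ∫ x in Ioi (0:ℝ), ((2:ℝ) * x ^ ((2:ℝ) - 1)) •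
        (Real.exp (-s * (x ^ (2:ℝ)) - c ^ 2 / (4 * (x ^ (2:ℝ)))) / Real.sqrt (x ^ (2:ℝ)))
      = ∫ x in Ioi (0:ℝ), (2 * Real.exp (-(c * Real.sqrt s)))
          * Real.exp (-(Real.sqrt s * x - (c / 2) / x) ^ 2) := by
        refine setIntegral_congr_fun measurableSet_Ioi (fun x hx => ?_)
        have := K_congr c s hc hs x hx
        rw [show |(2:ℝ)| = 2 by norm_num] at this
        exact this
    _ = (2 * Real.exp (-(c * Real.sqrt s))) *
          ∫ x in Ioi (0:ℝ), Real.exp (-(Real.sqrt s * x - (c / 2) / x) ^ 2) := by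
        rw [integral_const_mul]
    _ = Real.sqrt π / Real.sqrt s * Real.exp (-(c * Real.sqrt s)) := by
        rw [cs_main (Real.sqrt s) (c / 2) (Real.sqrt_pos.mpr hs) (by positivity)]
        have h0 : Real.sqrt s ≠ 0 := ne_of_gt (Real.sqrt_pos.mpr hs)
        field_simp

lemma K_int (c s : ℝ) (hc : 0 < c) (hs : 0 < s) :
    IntegrableOn (fun t : ℝ => Real.exp (-s * t - c ^ 2 / (4 * t)) / Real.sqrt t) (Ioi 0) := by
  rw [← integrableOn_Ioi_comp_rpow_iff
    (f := fun t => Real.exp (-s * t - c ^ 2 / (4 * t)) / Real.sqrt t) (p := 2) two_ne_zero]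
  have h := (cs_int (Real.sqrt s) (c / 2) (Real.sqrt_pos.mpr hs) (by positivity)).const_mul
    (2 * Real.exp (-(c * Real.sqrt s)))
  refine IntegrableOn.congr_fun h (fun x hx => ?_) measurableSet_Ioi
  exact (K_congr c s hc hs x hx).symm


lemma affine_image (k c r : ℝ) (hk : 0 < k) :
    (fun x : ℝ => k * x + c) '' Ioi r = Ioi (k * r + c) := by
  ext y
  simp only [mem_image, mem_Ioi]
  constructor
  · rintro ⟨x, hx, rfl⟩; nlinarith
  · intro hy
    refine ⟨(y - c) / k, by rw [lt_div_iff₀ hk]; nlinarith, by field_simp; ring⟩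

lemma affine_deriv (k c : ℝ) : ∀ x ∈ Ioi (0:ℝ),
    HasDerivWithinAt (fun x : ℝ => k * x + c) k (Ioi 0) x := by
  intro x hx
  simpa using (((hasDerivAt_id x).const_mul k).add_const c).hasDerivWithinAt

lemma affine_inj (k c : ℝ) (hk : 0 < k) : InjOn (fun x : ℝ => k * x + c) (Ioi 0) := by
  intro u _ v _ h
  dsimp at h
  have : k * u = k * v := by linarith
  exact mul_left_cancel₀ (ne_of_gt hk) this

lemma expo_id' (a b r x : ℝ) (hr : r ≠ 0) :
    -((1 / (2 * r)) * x + (a / (2 * r) + b * r)) ^ 2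
      = -(a * b + b ^ 2 * r ^ 2) + (-b * x - (a + x) ^ 2 / (4 * r ^ 2)) := by
  field_simp
  ring

lemma erfc_eq' (a b r : ℝ) (hr : 0 < r) :
    Real.exp (a * b + b ^ 2 * r ^ 2) * erfc (a / (2 * r) + b * r)
      = (∫ x in Ioi (0:ℝ), Real.exp (-b * x - (a + x) ^ 2 / (4 * r ^ 2))) / (Real.sqrt π * r) := by
  have hk : (0:ℝ) < 1 / (2 * r) := by positivity
  set x0 : ℝ := a / (2 * r) + b * r with hx0
  have himg : ∫ u in Ioi x0, Real.exp (-u ^ 2)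
      = ∫ x in Ioi (0:ℝ), |1 / (2 * r)| • Real.exp (-((1 / (2 * r)) * x + x0) ^ 2) := by
    have h := integral_image_eq_integral_abs_deriv_smul measurableSet_Ioi
      (affine_deriv (1 / (2 * r)) x0) (affine_inj (1 / (2 * r)) x0 hk)
      (fun u : ℝ => Real.exp (-u ^ 2))
    rw [affine_image _ _ _ hk] at h
    simpa using h
  have hcong : ∫ x in Ioi (0:ℝ), |1 / (2 * r)| • Real.exp (-((1 / (2 * r)) * x + x0) ^ 2)
      = (1 / (2 * r)) * (Real.exp (-(a * b + b ^ 2 * r ^ 2)) *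
          ∫ x in Ioi (0:ℝ), Real.exp (-b * x - (a + x) ^ 2 / (4 * r ^ 2))) := by
    rw [← integral_const_mul, ← integral_const_mul]
    refine setIntegral_congr_fun measurableSet_Ioi (fun x hx => ?_)
    rw [smul_eq_mul, abs_of_pos hk, hx0, expo_id' a b r x (ne_of_gt hr), Real.exp_add]
  rw [erfc, himg, hcong, Real.exp_neg]
  have h1 : Real.exp (a * b + b ^ 2 * r ^ 2) ≠ 0 := Real.exp_ne_zero _
  have h2 : Real.sqrt π ≠ 0 := by positivity
  generalize (∫ x in Ioi (0:ℝ), Real.exp (-b * x - (a + x) ^ 2 / (4 * r ^ 2))) = J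
  field_simp
section main
variable (a b s : ℝ)

noncomputable def f (a b s : ℝ) (x t : ℝ) : ℝ :=
  Real.exp (-b * x) / Real.sqrt π * (Real.exp (-s * t - (a + x) ^ 2 / (4 * t)) / Real.sqrt t)

lemma f_nonneg (x t : ℝ) : 0 ≤ f a b s x t := by
  unfold f; positivity

lemma f_meas : AEStronglyMeasurable (Function.uncurry (f a b s))
    ((volume.restrict (Ioi (0:ℝ))).prod (volume.restrict (Ioi (0:ℝ)))) := by
  apply Measurable.aestronglyMeasurable
  unfold Function.uncurry f
  fun_prop

lemma f_section_int (ha : 0 ≤ a) (hs : 0 < s) {x : ℝ} (hx : 0 < x) :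
    Integrable (f a b s x) (volume.restrict (Ioi 0)) := by
  have := (K_int (a + x) s (by linarith) hs).const_mul (Real.exp (-b * x) / Real.sqrt π)
  exact this

lemma f_section_val (ha : 0 ≤ a) (hs : 0 < s) {x : ℝ} (hx : 0 < x) :
    ∫ t in Ioi (0:ℝ), f a b s x t
      = Real.exp (-a * Real.sqrt s) / Real.sqrt s * Real.exp (-(b + Real.sqrt s) * x) := by
  unfold f
  rw [integral_const_mul, K_eq (a + x) s (by linarith) hs]
  have h2 : Real.sqrt π ≠ 0 := by positivity
  have h3 : Real.sqrt s ≠ 0 := by positivity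
  have step : Real.exp (-b * x) / Real.sqrt π *
      (Real.sqrt π / Real.sqrt s * Real.exp (-((a + x) * Real.sqrt s)))
      = Real.exp (-b * x + -((a + x) * Real.sqrt s)) / Real.sqrt s := by
    rw [Real.exp_add]; field_simp
  rw [step, div_mul_eq_mul_div, ← Real.exp_add]
  congr 2
  ring

lemma outer_int (ha : 0 ≤ a) (hb : 0 < b) (hs : 0 < s) :
    Integrable (fun x => Real.exp (-a * Real.sqrt s) / Real.sqrt s
      * Real.exp (-(b + Real.sqrt s) * x)) (volume.restrict (Ioi 0)) := by
  have hk : (0:ℝ) < b + Real.sqrt s := by positivity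
  exact (exp_neg_integrableOn_Ioi 0 hk).const_mul _

lemma f_prod_int (ha : 0 ≤ a) (hb : 0 < b) (hs : 0 < s) :
    Integrable (Function.uncurry (f a b s))
      ((volume.restrict (Ioi (0:ℝ))).prod (volume.restrict (Ioi (0:ℝ)))) := by
  rw [integrable_prod_iff (f_meas a b s)]
  constructor
  · refine (ae_restrict_iff' measurableSet_Ioi).mpr (ae_of_all _ (fun x hx => ?_))
    exact f_section_int a b s ha hs hx
  · apply Integrable.congr (outer_int a b s ha hb hs)
    refine (ae_restrict_iff' measurableSet_Ioi).mpr (ae_of_all _ (fun x hx => ?_))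
    have h1 : ∫ t in Ioi (0:ℝ), ‖f a b s x t‖ = ∫ t in Ioi (0:ℝ), f a b s x t := by
      refine setIntegral_congr_fun measurableSet_Ioi (fun t _ => ?_)
      rw [Real.norm_eq_abs, abs_of_nonneg (f_nonneg a b s x t)]
    rw [eq_comm]
    show ∫ t in Ioi (0:ℝ), ‖f a b s x t‖ = _
    rw [h1, f_section_val a b s ha hs hx]

lemma swapped (ha : 0 ≤ a) (hb : 0 < b) (hs : 0 < s) :
    ∫ t in Ioi (0:ℝ), ∫ x in Ioi (0:ℝ), f a b s x t
      = Real.exp (-a * Real.sqrt s) / (Real.sqrt s * (Real.sqrt s + b)) := by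
  rw [← integral_integral_swap (f_prod_int a b s ha hb hs)]
  have h1 : ∫ x in Ioi (0:ℝ), ∫ t in Ioi (0:ℝ), f a b s x t
      = ∫ x in Ioi (0:ℝ), Real.exp (-a * Real.sqrt s) / Real.sqrt s
          * Real.exp (-(b + Real.sqrt s) * x) := by
    refine setIntegral_congr_fun measurableSet_Ioi (fun x hx => ?_)
    exact f_section_val a b s ha hs hx
  rw [h1, integral_const_mul]
  have hk : (0:ℝ) < b + Real.sqrt s := by positivity
  have h2 : ∫ x in Ioi (0:ℝ), Real.exp (-(b + Real.sqrt s) * x) = (b + Real.sqrt s)⁻¹ := by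
    have := integral_comp_mul_left_Ioi (fun u : ℝ => Real.exp (-u)) 0 hk
    simp only [mul_zero, integral_exp_neg_Ioi, neg_zero, Real.exp_zero, smul_eq_mul,
      mul_one] at this
    simp_rw [neg_mul]
    exact this
  rw [h2]
  have h3 : Real.sqrt s ≠ 0 := by positivity
  field_simp
  ring

end main


/-- for every `a ≥ 0`, `b > 0` and `s > 0`,
`∫_0^∞ e^{−st} e^{ab + b²t} erfc(a/(2√t) + b√t) dt = e^{−a√s} / (√s (√s + b))`. -/
theorem laplace_exp_mul_erfc (a b s : ℝ) (ha : 0 ≤ a) (hb : 0 < b) (hs : 0 < s) :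
    ∫ t in Set.Ioi (0 : ℝ),
        Real.exp (-s * t) *
          (Real.exp (a * b + b ^ 2 * t) * erfc (a / (2 * Real.sqrt t) + b * Real.sqrt t)) =
      Real.exp (-a * Real.sqrt s) / (Real.sqrt s * (Real.sqrt s + b)) := by
  rw [← swapped a b s ha hb hs]
  refine setIntegral_congr_fun measurableSet_Ioi (fun t ht => ?_)
  have ht' : (0:ℝ) < t := ht
  have hrt : (0:ℝ) < Real.sqrt t := Real.sqrt_pos.mpr ht'
  have hr2 : Real.sqrt t ^ 2 = t := Real.sq_sqrt ht'.le
  have e := erfc_eq' a b (Real.sqrt t) hrt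
  rw [hr2] at e
  rw [e]
  set J := ∫ x in Ioi (0:ℝ), Real.exp (-b * x - (a + x) ^ 2 / (4 * t)) with hJ
  have step : Real.exp (-s * t) * (J / (Real.sqrt π * Real.sqrt t))
      = (Real.exp (-s * t) / (Real.sqrt π * Real.sqrt t)) * J := by ring
  rw [step, hJ, ← integral_const_mul]
  refine setIntegral_congr_fun measurableSet_Ioi (fun x _ => ?_)
  show _ = f a b s x t
  unfold f
  rw [show -s * t - (a + x) ^ 2 / (4 * t) = -s * t + (-((a + x) ^ 2 / (4 * t))) by ring,
    Real.exp_add,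
    show -b * x - (a + x) ^ 2 / (4 * t) = -b * x + (-((a + x) ^ 2 / (4 * t))) by ring,
    Real.exp_add]
  ring
end

section
/- For every a ≥ 0 and s > 0, ∫_0^∞ e^{−st}·(πt)^{-1/2}·exp(−a²/(4t)) dt = e^{−a·√s}/√s. -/
/-!
Write `α = √s` and `β = a / 2`, so the exponent is `-α²t - β²/t`. For `β > 0` substitute `t = q²`,
where `q = posRoot α β v` inverts `q ↦ α q - β / q`; this maps `ℝ` onto `(0, ∞)` and turns the
exponent into `-v² - 2αβ`. The Jacobian divided by `√(π t)` becomes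
`(1 + v / √(v² + 4αβ)) / (α √π)`, whose odd part integrates to zero against `exp (-v²)`, leaving
the Gaussian integral `√π`. For `a = 0` the integral is `Γ(1/2) / √(π s)`.
-/

open Real MeasureTheory Set

theorem integral_eq_zero_of_odd {E : Type*} [NormedAddCommGroup E] [NormedSpace ℝ E]
    {f : ℝ → E} (hf : ∀ x, f (-x) = -f x) : ∫ x, f x = 0 := by
  have := IsAddTorsionFree.of_isTorsionFree ℝ E
  have h := integral_neg_eq_self f volume
  simp only [hf, integral_neg] at h
  exact neg_eq_self.1 h

theorem add_sqrt_sq_add_pos {c : ℝ} (v : ℝ) (hc : 0 < c) : 0 < v + √(v ^ 2 + c) := by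
  have : |v| < √(v ^ 2 + c) := (lt_sqrt (abs_nonneg v)).2 (by rw [sq_abs]; linarith)
  linarith [neg_abs_le v]

/-- The inverse of `q ↦ α * q - β / q` on `(0, ∞)`, i.e. the positive root of `α q² - v q - β`. -/
noncomputable def posRoot (α β v : ℝ) : ℝ := (v + √(v ^ 2 + 4 * α * β)) / (2 * α)

section posRoot

variable {α β : ℝ}

theorem posRoot_pos (hα : 0 < α) (hβ : 0 < β) (v : ℝ) : 0 < posRoot α β v :=
  div_pos (add_sqrt_sq_add_pos v (by positivity)) (by positivity)

theorem mul_posRoot_sub_div_posRoot (hα : 0 < α) (hβ : 0 < β) (v : ℝ) :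
    α * posRoot α β v - β / posRoot α β v = v := by
  have hpos := add_sqrt_sq_add_pos v (by positivity : 0 < 4 * α * β)
  have hW : √(v ^ 2 + 4 * α * β) ^ 2 = v ^ 2 + 4 * α * β := sq_sqrt (by positivity)
  unfold posRoot
  generalize √(v ^ 2 + 4 * α * β) = W at hpos hW ⊢
  field_simp
  linear_combination hW

theorem posRoot_mul_sub_div (hα : 0 < α) (hβ : 0 ≤ β) {q : ℝ} (hq : 0 < q) :
    posRoot α β (α * q - β / q) = q := by
  have hW : √((α * q - β / q) ^ 2 + 4 * α * β) = α * q + β / q := by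
    rw [show (α * q - β / q) ^ 2 + 4 * α * β = (α * q + β / q) ^ 2 by field_simp; ring]
    exact sqrt_sq (by positivity)
  unfold posRoot
  rw [hW]
  field_simp
  ring

theorem sq_mul_posRoot_sq_add (hα : 0 < α) (hβ : 0 < β) (v : ℝ) :
    α ^ 2 * posRoot α β v ^ 2 + β ^ 2 / posRoot α β v ^ 2 = v ^ 2 + 2 * α * β := by
  have hP := (posRoot_pos hα hβ v).ne'
  nth_rw 3 [← mul_posRoot_sub_div_posRoot hα hβ v]
  field_simp
  ring

theorem hasDerivAt_posRoot (hα : 0 < α) (hβ : 0 < β) (v : ℝ) :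
    HasDerivAt (posRoot α β) (posRoot α β v / √(v ^ 2 + 4 * α * β)) v := by
  have hc : 0 < v ^ 2 + 4 * α * β := by positivity
  have hW := sqrt_pos.2 hc
  have hsq : HasDerivAt (fun v : ℝ => v ^ 2 + 4 * α * β) (2 * v) v := by
    simpa using (hasDerivAt_pow 2 v).add_const (4 * α * β)
  refine (((hasDerivAt_id v).add (hsq.sqrt hc.ne')).div_const (2 * α)).congr_deriv ?_
  unfold posRoot
  field_simp
  ring

theorem injective_posRoot_sq (hα : 0 < α) (hβ : 0 < β) :
    Function.Injective (fun v => posRoot α β v ^ 2) := by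
  intro v w h
  rw [← mul_posRoot_sub_div_posRoot hα hβ v, ← mul_posRoot_sub_div_posRoot hα hβ w,
    (pow_left_inj₀ (posRoot_pos hα hβ v).le (posRoot_pos hα hβ w).le two_ne_zero).1 h]

theorem range_posRoot_sq (hα : 0 < α) (hβ : 0 < β) :
    range (fun v => posRoot α β v ^ 2) = Ioi 0 := by
  refine Subset.antisymm (range_subset_iff.2 fun v => pow_pos (posRoot_pos hα hβ v) 2) ?_
  intro t ht
  refine ⟨α * √t - β / √t, ?_⟩
  simp only [posRoot_mul_sub_div hα hβ.le (sqrt_pos.2 ht), sq_sqrt (le_of_lt ht)]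

end posRoot

theorem integrable_div_sqrt_sq_add_mul_exp_neg_sq {c : ℝ} (hc : 0 < c) :
    Integrable (fun v : ℝ => v / √(v ^ 2 + c) * exp (-v ^ 2)) := by
  have hW : ∀ v : ℝ, 0 < √(v ^ 2 + c) := fun v => sqrt_pos.2 (by positivity)
  have hbound : ∀ v : ℝ, ‖v / √(v ^ 2 + c)‖ ≤ 1 := fun v => by
    rw [norm_div, norm_of_nonneg (hW v).le, div_le_one (hW v), norm_eq_abs]
    exact abs_le_sqrt (by linarith)
  simpa using (integrable_exp_neg_mul_sq one_pos).bdd_mul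
    (continuous_id.div (by fun_prop) fun v => (hW v).ne').aestronglyMeasurable
    (ae_of_all _ hbound)

theorem integral_div_sqrt_sq_add_mul_exp_neg_sq (c : ℝ) :
    ∫ v : ℝ, v / √(v ^ 2 + c) * exp (-v ^ 2) = 0 :=
  integral_eq_zero_of_odd fun v => by simp only [neg_sq, neg_div, neg_mul]

theorem abs_deriv_smul_integrand_posRoot_sq {α β : ℝ} (hα : 0 < α) (hβ : 0 < β) (v : ℝ) :
    |2 * posRoot α β v * (posRoot α β v / √(v ^ 2 + 4 * α * β))| •
        (exp (-α ^ 2 * posRoot α β v ^ 2) *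
          ((√(π * posRoot α β v ^ 2))⁻¹ * exp (-β ^ 2 / posRoot α β v ^ 2))) =
      exp (-(2 * α * β)) / (√π * α) *
        (exp (-v ^ 2) + v / √(v ^ 2 + 4 * α * β) * exp (-v ^ 2)) := by
  have hP := posRoot_pos hα hβ v
  have hW := sqrt_pos.2 (by positivity : 0 < v ^ 2 + 4 * α * β)
  have hexp : exp (-α ^ 2 * posRoot α β v ^ 2) * exp (-β ^ 2 / posRoot α β v ^ 2) =
      exp (-v ^ 2) * exp (-(2 * α * β)) := by
    rw [← exp_add, ← exp_add, neg_mul, neg_div, ← neg_add, sq_mul_posRoot_sq_add hα hβ, neg_add]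
  have hroot : 2 * α * posRoot α β v = v + √(v ^ 2 + 4 * α * β) := by
    unfold posRoot; field_simp
  rw [smul_eq_mul, abs_of_pos (by positivity), sqrt_mul pi_pos.le, sqrt_sq hP.le]
  calc _ = 2 * α * posRoot α β v / (α * √π * √(v ^ 2 + 4 * α * β)) *
        (exp (-α ^ 2 * posRoot α β v ^ 2) * exp (-β ^ 2 / posRoot α β v ^ 2)) := by
        field_simp
    _ = _ := by
        rw [hroot, hexp]
        field_simp
        ring

theorem integral_exp_neg_sq_mul_inv_sqrt_mul_exp_neg_sq_div {α β : ℝ} (hα : 0 < α)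
    (hβ : 0 < β) :
    ∫ t in Ioi (0 : ℝ), exp (-α ^ 2 * t) * ((√(π * t))⁻¹ * exp (-β ^ 2 / t)) =
      exp (-(2 * α * β)) / α := by
  have hderiv : ∀ v ∈ univ, HasDerivWithinAt (fun v => posRoot α β v ^ 2)
      (2 * posRoot α β v * (posRoot α β v / √(v ^ 2 + 4 * α * β))) univ v := fun v _ =>
    ((hasDerivAt_posRoot hα hβ v).pow 2).hasDerivWithinAt.congr_deriv (by ring)
  rw [← range_posRoot_sq hα hβ, ← image_univ,
    integral_image_eq_integral_abs_deriv_smul MeasurableSet.univ hderiv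
      (injective_posRoot_sq hα hβ).injOn, setIntegral_univ]
  simp_rw [abs_deriv_smul_integrand_posRoot_sq hα hβ]
  rw [integral_const_mul, integral_add (by simpa using integrable_exp_neg_mul_sq one_pos)
      (integrable_div_sqrt_sq_add_mul_exp_neg_sq (by positivity)),
    integral_div_sqrt_sq_add_mul_exp_neg_sq, add_zero]
  have hgauss : ∫ v : ℝ, exp (-v ^ 2) = √π := by simpa using integral_gaussian 1
  rw [hgauss]
  field_simp [(sqrt_pos.2 pi_pos).ne']

theorem integral_exp_neg_mul_mul_inv_sqrt_pi_mul {s : ℝ} (hs : 0 < s) :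
    ∫ t in Ioi (0 : ℝ), exp (-s * t) * (√(π * t))⁻¹ = 1 / √s := by
  have hkernel : ∀ t ∈ Ioi (0 : ℝ),
      exp (-s * t) * (√(π * t))⁻¹ = (√π)⁻¹ * (t ^ ((1 / 2 : ℝ) - 1) * exp (-(s * t))) := by
    intro t ht
    rw [sqrt_mul pi_pos.le, sqrt_eq_rpow t, show (1 / 2 : ℝ) - 1 = -(1 / 2) by norm_num,
      rpow_neg (le_of_lt ht), neg_mul]
    ring
  rw [setIntegral_congr_fun measurableSet_Ioi hkernel, integral_const_mul,
    integral_rpow_mul_exp_neg_mul_Ioi one_half_pos hs, Gamma_one_half_eq, ← sqrt_eq_rpow,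
    sqrt_div' 1 hs.le, sqrt_one]
  field_simp [(sqrt_pos.2 pi_pos).ne']

/-- for every `a ≥ 0` and `s > 0`, the Laplace transform in time of the
one-dimensional heat kernel `t ↦ (πt)^{-1/2} exp(−a²/(4t))` is `e^{−a√s}/√s`. -/
theorem laplace_heat_kernel (a s : ℝ) (ha : 0 ≤ a) (hs : 0 < s) :
    ∫ t in Set.Ioi (0 : ℝ),
        Real.exp (-s * t) * ((Real.sqrt (π * t))⁻¹ * Real.exp (-a ^ 2 / (4 * t))) =
      Real.exp (-a * Real.sqrt s) / Real.sqrt s := by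
  rcases ha.eq_or_lt with rfl | ha
  · simpa using integral_exp_neg_mul_mul_inv_sqrt_pi_mul hs
  · have key := integral_exp_neg_sq_mul_inv_sqrt_mul_exp_neg_sq_div (sqrt_pos.2 hs)
      (half_pos ha)
    rw [sq_sqrt hs.le] at key
    convert key using 6 <;> ring
end

section
/- Let f : ℝ → [0,∞) be measurable, vanishing on (−∞,0), with ∫_ℝ f ≤ 1 and ‖f‖_{L²(ℝ)} < ∞. Then for every natural number j ≥ 2 and every τ ∈ ℝ, the j-th convolution power satisfies f^{j*}(τ) ≤ ‖f‖_{L²(ℝ)}². -/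
open Real MeasureTheory Set

/-- Convolution powers of a function `f : ℝ → ℝ`: `f^{1*} = f` and
`f^{(j+1)*}(τ) = ∫ f^{j*}(x) f(τ−x) dx`.  `convPow f 0` is a junk value. -/
noncomputable def convPow (f : ℝ → ℝ) : ℕ → ℝ → ℝ
  | 0 => fun _ => 0
  | 1 => f
  | (n + 2) => fun τ => ∫ x, convPow f (n + 1) x * f (τ - x)

/-- `poissonPMFReal'`: the pmf of a Poisson random variable with mean `λ`,
`p[j;λ] = λ^j e^{−λ}/j!`. -/
noncomputable def pois (j : ℕ) (l : ℝ) : ℝ := l ^ j * Real.exp (-l) / j.factorial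

/-! A convolution `∫ g(x) f(τ − x) dx` is bounded by Cauchy–Schwarz (here in the form
`ab ≤ (a² + b²)/2`, using translation invariance of `∫ f²`) when `g = f`, and by
`(sup g) · ∫ f` in general. So `f^{2*} ≤ ‖f‖₂²`, and each further convolution with `f`
multiplies this bound by at most `∫ f ≤ 1`. -/

/-- A non-integrable `f` has integral `0`, so `f` need not be assumed integrable. -/
theorem integral_mono_of_integral_nonneg {α : Type*} [MeasurableSpace α] {μ : Measure α}
    {f g : α → ℝ} (hg : Integrable g μ) (hfg : f ≤ g) (hg_nonneg : 0 ≤ ∫ x, g x ∂μ) :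
    ∫ x, f x ∂μ ≤ ∫ x, g x ∂μ := by
  by_cases hf : Integrable f μ
  · exact integral_mono hf hg hfg
  · rwa [integral_undef hf]

theorem integral_mul_comp_sub_le_integral_sq {f : ℝ → ℝ} (hf_sq : Integrable (fun x => f x ^ 2))
    (τ : ℝ) : ∫ x, f x * f (τ - x) ≤ ∫ x, f x ^ 2 := by
  have h_refl : ∫ x, f (τ - x) ^ 2 = ∫ x, f x ^ 2 :=
    integral_sub_left_eq_self (fun x => f x ^ 2) volume τ
  calc ∫ x, f x * f (τ - x) ≤ ∫ x, (f x ^ 2 + f (τ - x) ^ 2) / 2 := by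
        refine integral_mono_of_integral_nonneg ((hf_sq.add (hf_sq.comp_sub_left τ)).div_const 2)
          (fun x => ?_) (integral_nonneg fun x => by positivity)
        nlinarith [sq_nonneg (f x - f (τ - x))]
    _ = ∫ x, f x ^ 2 := by
        rw [integral_div, integral_add hf_sq (hf_sq.comp_sub_left τ), h_refl]
        ring

theorem integral_mul_comp_sub_le_mul_integral {f g : ℝ → ℝ} {M : ℝ} (hM : 0 ≤ M)
    (hg : ∀ x, g x ≤ M) (hf_nonneg : ∀ x, 0 ≤ f x) (hf : Integrable f) (τ : ℝ) :
    ∫ x, g x * f (τ - x) ≤ M * ∫ x, f x := by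
  have h_refl : ∫ x, M * f (τ - x) = M * ∫ x, f x := by
    rw [integral_const_mul, integral_sub_left_eq_self f volume τ]
  calc ∫ x, g x * f (τ - x) ≤ ∫ x, M * f (τ - x) :=
        integral_mono_of_integral_nonneg ((hf.comp_sub_left τ).const_mul M)
          (fun x => mul_le_mul_of_nonneg_right (hg x) (hf_nonneg _))
          (h_refl ▸ mul_nonneg hM (integral_nonneg hf_nonneg))
    _ = M * ∫ x, f x := h_refl

theorem convPow_succ_of_ne_zero (f : ℝ → ℝ) {n : ℕ} (hn : n ≠ 0) (τ : ℝ) :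
    convPow f (n + 1) τ = ∫ x, convPow f n x * f (τ - x) := by
  obtain ⟨k, rfl⟩ := Nat.exists_eq_succ_of_ne_zero hn
  rfl

theorem convPow_le_sq_norm_general (f : ℝ → ℝ)
    (hf_nonneg : ∀ x, 0 ≤ f x)
    (hf_int : Integrable f) (hf_mass : ∫ x, f x ≤ 1)
    (hf_sq : Integrable (fun x => f x ^ 2))
    (j : ℕ) (hj : 2 ≤ j) (τ : ℝ) :
    convPow f j τ ≤ ∫ x, f x ^ 2 := by
  have h_sq_nonneg : 0 ≤ ∫ x, f x ^ 2 := integral_nonneg fun x => sq_nonneg _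
  induction j, hj using Nat.le_induction generalizing τ with
  | base => exact integral_mul_comp_sub_le_integral_sq hf_sq τ
  | succ j hj ih =>
    calc convPow f (j + 1) τ = ∫ x, convPow f j x * f (τ - x) :=
          convPow_succ_of_ne_zero f (by omega) τ
      _ ≤ (∫ x, f x ^ 2) * ∫ x, f x :=
          integral_mul_comp_sub_le_mul_integral h_sq_nonneg ih hf_nonneg hf_int τ
      _ ≤ ∫ x, f x ^ 2 := mul_le_of_le_one_right h_sq_nonneg hf_mass

/-- if `f ≥ 0` vanishes on `(−∞,0)`, `∫ f ≤ 1` and `‖f‖₂ < ∞`, then for every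
`j ≥ 2` and every `τ`, `f^{j*}(τ) ≤ ‖f‖₂² = ∫ f²`. -/
theorem convPow_le_sq_norm (f : ℝ → ℝ) (hf_meas : Measurable f)
    (hf_nonneg : ∀ x, 0 ≤ f x) (hf_zero : ∀ x < (0 : ℝ), f x = 0)
    (hf_int : Integrable f) (hf_mass : ∫ x, f x ≤ 1)
    (hf_sq : Integrable (fun x => f x ^ 2))
    (j : ℕ) (hj : 2 ≤ j) (τ : ℝ) :
    convPow f j τ ≤ ∫ x, f x ^ 2 :=
  convPow_le_sq_norm_general f hf_nonneg hf_int hf_mass hf_sq j hj τ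
end

section
/- Let f : ℝ → [0,∞) be measurable, vanishing on (−∞,0), with ∫_ℝ f ≤ 1 and ‖f‖_{L²(ℝ)} < ∞, let κ_d ≥ 0, T > 0 and ε > 0, and let J ≥ 2 be a natural number such that Σ_{j=J−1}^∞ p[j; κ_d·T] ≤ ε/‖f‖_{L²(ℝ)}². Then for all τ, t with 0 ≤ τ ≤ t ≤ T, the truncation error of the series characterizing the observation model satisfies Σ_{j=J}^∞ f^{j*}(τ)·p[j−1; κ_d·(t−τ)] ≤ ε. -/
open Real MeasureTheory Set

/-! For `j ≥ 2` the convolution power `f^{j*}` is bounded pointwise by `‖f‖₂²`: for `j = 2` by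
AM-GM, `∫ f(x) f(τ-x) dx ≤ ½ ∫ (f(x)² + f(τ-x)²) dx = ‖f‖₂²`, and convolving a function bounded
by `M` with the sub-probability density `f` keeps it bounded by `M`. Hence the truncation error is
at most `‖f‖₂²` times the Poisson tail `Σ_{j ≥ J-1} p[j; κ_d (t-τ)]`, and Poisson tails increase
with the mean because `d/dλ Σ_{j ≤ k} p[j; λ] = -p[k; λ]`. -/

lemma pois_nonneg (j : ℕ) {l : ℝ} (hl : 0 ≤ l) : 0 ≤ pois j l := by
  unfold pois
  positivity

lemma hasSum_pois (l : ℝ) : HasSum (fun j => pois j l) 1 := by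
  have h := (NormedSpace.expSeries_div_hasSum_exp l).mul_right (exp (-l))
  rw [← Real.exp_eq_exp_ℝ, ← Real.exp_add, add_neg_cancel, Real.exp_zero] at h
  simpa only [pois, div_mul_eq_mul_div] using h

lemma tsum_pois_add (k : ℕ) (l : ℝ) :
    ∑' j, pois (k + j) l = 1 - ∑ j ∈ Finset.range k, pois j l := by
  simp_rw [Nat.add_comm k]
  exact ((hasSum_nat_add_iff' k).2 (hasSum_pois l)).tsum_eq

lemma hasDerivAt_pois_zero (l : ℝ) : HasDerivAt (pois 0) (-pois 0 l) l := by
  have h : pois 0 = fun l => exp (-l) := by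
    funext l
    simp [pois]
  simpa [h] using (hasDerivAt_neg l).exp

lemma hasDerivAt_pois_succ (j : ℕ) (l : ℝ) :
    HasDerivAt (pois (j + 1)) (pois j l - pois (j + 1) l) l := by
  have h := ((hasDerivAt_pow (j + 1) l).mul (hasDerivAt_neg l).exp).div_const
    ((j + 1).factorial : ℝ)
  refine h.congr_deriv ?_
  simp only [pois, Nat.factorial_succ, Nat.cast_mul]
  field_simp
  push_cast
  ring

lemma hasDerivAt_sum_range_pois (k : ℕ) (l : ℝ) :
    HasDerivAt (fun l => ∑ j ∈ Finset.range (k + 1), pois j l) (-pois k l) l := by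
  induction k with
  | zero => simpa using hasDerivAt_pois_zero l
  | succ k ih =>
    simp_rw [Finset.sum_range_succ _ (k + 1)]
    exact (ih.add (hasDerivAt_pois_succ k l)).congr_deriv (by ring)

lemma antitoneOn_sum_range_pois :
    ∀ k, AntitoneOn (fun l => ∑ j ∈ Finset.range k, pois j l) (Ici 0)
  | 0 => by simpa using antitoneOn_const
  | k + 1 => by
    refine antitoneOn_of_hasDerivWithinAt_nonpos (convex_Ici 0)
      (fun l _ => (hasDerivAt_sum_range_pois k l).continuousAt.continuousWithinAt)
      (fun l _ => (hasDerivAt_sum_range_pois k l).hasDerivWithinAt) fun l hl => ?_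
    rw [interior_Ici] at hl
    exact neg_nonpos.2 (pois_nonneg k (le_of_lt hl))

lemma monotoneOn_tsum_pois_add (k : ℕ) :
    MonotoneOn (fun l => ∑' j, pois (k + j) l) (Ici 0) := by
  intro a ha b hb hab
  simp only [tsum_pois_add]
  linarith [antitoneOn_sum_range_pois k ha hb hab]

section ConvPow

variable {f : ℝ → ℝ}

lemma convPow_nonneg (hf : ∀ x, 0 ≤ f x) : ∀ n τ, 0 ≤ convPow f n τ
  | 0, _ => le_rfl
  | 1, τ => hf τ
  | n + 2, _ => integral_nonneg fun x => mul_nonneg (convPow_nonneg hf (n + 1) x) (hf _)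

lemma convPow_two_le_integral_sq (hf : ∀ x, 0 ≤ f x) (hf_sq : Integrable (fun x => f x ^ 2))
    (τ : ℝ) : convPow f 2 τ ≤ ∫ x, f x ^ 2 := by
  have hf_sq' : Integrable (fun x => f (τ - x) ^ 2) := hf_sq.comp_sub_left τ
  calc convPow f 2 τ = ∫ x, f x * f (τ - x) := rfl
    _ ≤ ∫ x, (f x ^ 2 + f (τ - x) ^ 2) / 2 := by
      refine integral_mono_of_nonneg (.of_forall fun x => mul_nonneg (hf x) (hf _))
        ((hf_sq.add hf_sq').div_const 2) (.of_forall fun x => ?_)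
      nlinarith [sq_nonneg (f x - f (τ - x))]
    _ = ∫ x, f x ^ 2 := by
      rw [integral_div, integral_add hf_sq hf_sq',
        integral_sub_left_eq_self (fun x => f x ^ 2) volume τ]
      ring

lemma convPow_succ_le_of_le (hf : ∀ x, 0 ≤ f x) (hf_int : Integrable f)
    (hf_mass : ∫ x, f x ≤ 1) {n : ℕ} {M : ℝ} (hM : 0 ≤ M) (h : ∀ x, convPow f (n + 1) x ≤ M)
    (τ : ℝ) : convPow f (n + 2) τ ≤ M :=
  calc convPow f (n + 2) τ = ∫ x, convPow f (n + 1) x * f (τ - x) := rfl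
    _ ≤ ∫ x, M * f (τ - x) :=
      integral_mono_of_nonneg
        (.of_forall fun x => mul_nonneg (convPow_nonneg hf _ x) (hf _))
        ((hf_int.comp_sub_left τ).const_mul M)
        (.of_forall fun x => mul_le_mul_of_nonneg_right (h x) (hf _))
    _ = M * ∫ x, f x := by rw [integral_const_mul, integral_sub_left_eq_self f volume τ]
    _ ≤ M := mul_le_of_le_one_right hM hf_mass

lemma convPow_add_two_le_integral_sq (hf : ∀ x, 0 ≤ f x) (hf_int : Integrable f)
    (hf_mass : ∫ x, f x ≤ 1) (hf_sq : Integrable (fun x => f x ^ 2)) (n : ℕ) (τ : ℝ) :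
    convPow f (n + 2) τ ≤ ∫ x, f x ^ 2 := by
  induction n generalizing τ with
  | zero => exact convPow_two_le_integral_sq hf hf_sq τ
  | succ n ih =>
    exact convPow_succ_le_of_le hf hf_int hf_mass (integral_nonneg fun x => sq_nonneg _) ih τ

lemma tsum_convPow_mul_pois_le (hf : ∀ x, 0 ≤ f x) (hf_int : Integrable f)
    (hf_mass : ∫ x, f x ≤ 1) (hf_sq : Integrable (fun x => f x ^ 2)) (k : ℕ) {l : ℝ}
    (hl : 0 ≤ l) (τ : ℝ) :
    ∑' j, convPow f (k + 2 + j) τ * pois (k + 1 + j) l ≤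
      (∫ x, f x ^ 2) * ∑' j, pois (k + 1 + j) l := by
  have hbound : ∀ j, convPow f (k + 2 + j) τ * pois (k + 1 + j) l ≤
      (∫ x, f x ^ 2) * pois (k + 1 + j) l := fun j => by
    rw [show k + 2 + j = k + j + 2 by omega]
    exact mul_le_mul_of_nonneg_right
      (convPow_add_two_le_integral_sq hf hf_int hf_mass hf_sq _ τ) (pois_nonneg _ hl)
  have hsum : Summable fun j => (∫ x, f x ^ 2) * pois (k + 1 + j) l := by
    simp_rw [Nat.add_comm (k + 1)]
    exact ((summable_nat_add_iff (k + 1)).2 (hasSum_pois l).summable).mul_left _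
  rw [← tsum_mul_left]
  exact Summable.tsum_le_tsum hbound (hsum.of_nonneg_of_le
    (fun j => mul_nonneg (convPow_nonneg hf _ τ) (pois_nonneg _ hl)) hbound) hsum

end ConvPow

theorem truncation_error_le_general (f : ℝ → ℝ)
    (hf_nonneg : ∀ x, 0 ≤ f x)
    (hf_int : Integrable f) (hf_mass : ∫ x, f x ≤ 1)
    (hf_sq : Integrable (fun x => f x ^ 2))
    (κd T ε : ℝ) (hκd : 0 ≤ κd) (hε : 0 < ε)
    (J : ℕ) (hJ : 2 ≤ J)
    (hJ_tail : ∑' j : ℕ, pois (J - 1 + j) (κd * T) ≤ ε / ∫ x, f x ^ 2)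
    (τ t : ℝ) (hτ : 0 ≤ τ) (hτt : τ ≤ t) (htT : t ≤ T) :
    ∑' j : ℕ, convPow f (J + j) τ * pois (J + j - 1) (κd * (t - τ)) ≤ ε := by
  obtain ⟨K, rfl⟩ := Nat.exists_eq_add_of_le' hJ
  have hl : 0 ≤ κd * (t - τ) := mul_nonneg hκd (sub_nonneg.2 hτt)
  have hlT : κd * (t - τ) ≤ κd * T := mul_le_mul_of_nonneg_left (by linarith) hκd
  have hM : 0 ≤ ∫ x, f x ^ 2 := integral_nonneg fun x => sq_nonneg _
  have hidx : ∀ j, K + 2 + j - 1 = K + 1 + j := fun j => by omega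
  simp only [hidx] at hJ_tail ⊢
  calc _ ≤ (∫ x, f x ^ 2) * ∑' j, pois (K + 1 + j) (κd * (t - τ)) :=
        tsum_convPow_mul_pois_le hf_nonneg hf_int hf_mass hf_sq K hl τ
    _ ≤ (∫ x, f x ^ 2) * ∑' j, pois (K + 1 + j) (κd * T) :=
        mul_le_mul_of_nonneg_left (monotoneOn_tsum_pois_add _ hl (hl.trans hlT) hlT) hM
    _ ≤ (∫ x, f x ^ 2) * (ε / ∫ x, f x ^ 2) := mul_le_mul_of_nonneg_left hJ_tail hM
    _ ≤ ε := by
        rw [mul_div_left_comm]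
        exact mul_le_of_le_one_right hε.le (div_self_le_one _)

/-- truncation error bound for the series characterizing the observation
model: if `J ≥ 2` and `Σ_{j=J−1}^∞ p[j; κ_d T] ≤ ε/‖f‖₂²`, then for all `0 ≤ τ ≤ t ≤ T`,
`Σ_{j=J}^∞ f^{j*}(τ) p[j−1; κ_d(t−τ)] ≤ ε`. -/
theorem truncation_error_le (f : ℝ → ℝ) (hf_meas : Measurable f)
    (hf_nonneg : ∀ x, 0 ≤ f x) (hf_zero : ∀ x < (0 : ℝ), f x = 0)
    (hf_int : Integrable f) (hf_mass : ∫ x, f x ≤ 1)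
    (hf_sq : Integrable (fun x => f x ^ 2))
    (κd T ε : ℝ) (hκd : 0 ≤ κd) (hT : 0 < T) (hε : 0 < ε)
    (J : ℕ) (hJ : 2 ≤ J)
    (hJ_tail : ∑' j : ℕ, pois (J - 1 + j) (κd * T) ≤ ε / ∫ x, f x ^ 2)
    (τ t : ℝ) (hτ : 0 ≤ τ) (hτt : τ ≤ t) (htT : t ≤ T) :
    ∑' j : ℕ, convPow f (J + j) τ * pois (J + j - 1) (κd * (t - τ)) ≤ ε :=
  truncation_error_le_general f hf_nonneg hf_int hf_mass hf_sq κd T ε hκd hε J hJ hJ_tail τ t hτ hτt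
    htT
end
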